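/- Let C ◁ D be a normal subgroup of a finite group D such that the quotient D/C is cyclic, and let χ : C → ℂˣ be a homomorphism invariant under conjugation by D. Then χ extends to a homomorphism χ̃ : D → ℂˣ. -/

import Mathlib

/-!
Choose `g ∈ G` mapping to a generator of `G ⧸ N`. Then `G` is a quotient of the semidirect
product `N ⋊ ℤ` in which `1 ∈ ℤ` acts by conjugation with `g`, via `(c, k) ↦ c * g ^ k`.
Since `χ` is invariant, `(c, k) ↦ χ c * z ^ k` is a character of `N ⋊ ℤ` for every `z`, and it
kills the kernel `{(g ^ (-k), k) | g ^ k ∈ N}` as soon as `χ (g ^ k) = z ^ k` there. The exponents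
`k` with `g ^ k ∈ N` are the multiples of `n = orderOf (g N)`, so it suffices that
`z ^ n = χ (g ^ n)`, which is solvable in the divisible group `ℂˣ`.
-/

open SemidirectProduct

noncomputable instance IsAlgClosed.unitsRootableBy (k : Type*) [Field k] [IsAlgClosed k] :
    RootableBy kˣ ℕ :=
  rootableByOfPowLeftSurj _ _ fun {n} hn a ↦ by
    obtain ⟨z, hz⟩ := IsAlgClosed.exists_pow_nat_eq (a : k) (Nat.pos_of_ne_zero hn)
    have hz0 : z ≠ 0 := by rintro rfl; exact a.ne_zero (by simp [← hz, hn])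
    exact ⟨Units.mk0 z hz0, Units.ext (by simpa using hz)⟩

namespace Subgroup

variable {G : Type*} [Group G] {N : Subgroup G} [N.Normal]

theorem zpow_mem_iff_orderOf_dvd (g : G) (k : ℤ) :
    g ^ k ∈ N ↔ (orderOf (g : G ⧸ N) : ℤ) ∣ k := by
  rw [orderOf_dvd_iff_zpow_eq_one, ← QuotientGroup.mk_zpow, QuotientGroup.eq_one_iff]

variable {A : Type*} [CommGroup A]

theorem exists_apply_zpow_eq_zpow [RootableBy A ℕ] (χ : N →* A) (g : G) :
    ∃ z : A, ∀ (k : ℤ) (h : g ^ k ∈ N), χ ⟨g ^ k, h⟩ = z ^ k := by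
  set n := orderOf (g : G ⧸ N)
  have hn : g ^ n ∈ N := by simpa using (zpow_mem_iff_orderOf_dvd (N := N) g n).2 dvd_rfl
  obtain ⟨z, hz⟩ : ∃ z : A, z ^ n = χ ⟨g ^ n, hn⟩ := by
    rcases eq_or_ne n 0 with h0 | h0
    · refine ⟨1, ?_⟩
      simp only [one_pow]
      convert χ.map_one.symm using 2
      ext; simp [h0]
    · exact ⟨RootableBy.root _ n, RootableBy.root_cancel _ h0⟩
  refine ⟨z, fun k hk ↦ ?_⟩
  obtain ⟨m, rfl⟩ := (zpow_mem_iff_orderOf_dvd g k).1 hk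
  have : (⟨g ^ ((n : ℤ) * m), hk⟩ : N) = ⟨g ^ n, hn⟩ ^ m := by ext; simp [zpow_mul]
  rw [this, map_zpow, ← hz, zpow_mul, zpow_natCast]

abbrev conjZPowersAction (N : Subgroup G) [N.Normal] (g : G) : Multiplicative ℤ →* MulAut N :=
  MulAut.conjNormal.comp (zpowersHom G g)

def semidirectZPowersHom (g : G) : N ⋊[conjZPowersAction N g] Multiplicative ℤ →* G :=
  lift N.subtype (zpowersHom G g) fun _ ↦ by
    ext; simp only [MonoidHom.comp_apply, MulEquiv.coe_toMonoidHom, MulAut.conjNormal_apply,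
      MulAut.conj_apply, coe_subtype]

theorem semidirectZPowersHom_surjective {g : G} (hg : ∀ x : G ⧸ N, x ∈ zpowers (g : G ⧸ N)) :
    Function.Surjective (semidirectZPowersHom (N := N) g) := by
  intro x
  obtain ⟨k, hk⟩ := mem_zpowers_iff.1 (hg x)
  have hmem : x * g ^ (-k) ∈ N := by
    rw [← QuotientGroup.eq_one_iff, QuotientGroup.mk_mul, QuotientGroup.mk_zpow, ← hk]
    group
  refine ⟨⟨⟨_, hmem⟩, Multiplicative.ofAdd k⟩, ?_⟩
  simp [semidirectZPowersHom, lift]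

def semidirectZPowersChar (χ : N →* A) (hχ : ∀ d c, χ (MulAut.conjNormal d c) = χ c)
    (g : G) (z : A) : N ⋊[conjZPowersAction N g] Multiplicative ℤ →* A :=
  lift χ (zpowersHom A z) fun _ ↦ by
    ext; simp only [MonoidHom.comp_apply, MulEquiv.coe_toMonoidHom, hχ, MulAut.conj_apply,
      mul_inv_cancel_comm]

theorem ker_semidirectZPowersHom_le {χ : N →* A} (hχ : ∀ d c, χ (MulAut.conjNormal d c) = χ c)
    {g : G} {z : A} (hz : ∀ (k : ℤ) (h : g ^ k ∈ N), χ ⟨g ^ k, h⟩ = z ^ k) :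
    (semidirectZPowersHom g).ker ≤ (semidirectZPowersChar χ hχ g z).ker := by
  rintro ⟨c, k⟩ hck
  have hc : (c : G) = g ^ (-k.toAdd) := by
    simpa [semidirectZPowersHom, lift, mul_eq_one_iff_eq_inv] using hck
  have hχc : χ c = z ^ (-k.toAdd) := by
    rw [← hz _ (hc ▸ c.2)]; congr; ext; exact hc
  simp [semidirectZPowersChar, lift, hχc]

theorem exists_extension_of_isCyclic_quotient [RootableBy A ℕ] [IsCyclic (G ⧸ N)] (χ : N →* A)
    (hχ : ∀ d c, χ (MulAut.conjNormal d c) = χ c) : ∃ ψ : G →* A, ψ.comp N.subtype = χ := by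
  obtain ⟨σ, hσ⟩ := IsCyclic.exists_generator (α := G ⧸ N)
  obtain ⟨g, rfl⟩ := QuotientGroup.mk_surjective σ
  obtain ⟨z, hz⟩ := exists_apply_zpow_eq_zpow χ g
  let ψ := (semidirectZPowersHom g).liftOfSurjective (semidirectZPowersHom_surjective hσ)
    ⟨semidirectZPowersChar χ hχ g z, ker_semidirectZPowersHom_le hχ hz⟩
  refine ⟨ψ, MonoidHom.ext fun c ↦ ?_⟩
  have hc : semidirectZPowersHom g (inl c) = c := lift_inl ..
  simp only [MonoidHom.comp_apply, coe_subtype, ← hc, ψ, MonoidHom.liftOfRightInverse_comp_apply]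
  exact lift_inl ..

end Subgroup

theorem invariant_character_extends_of_cyclic_quotient_general {D : Type*} [Group D]
    (C : Subgroup D) [C.Normal] [IsCyclic (D ⧸ C)]
    (χ : C →* ℂˣ)
    (hχ : ∀ (d : D) (c : C) (h : d⁻¹ * (c : D) * d ∈ C), χ ⟨d⁻¹ * c * d, h⟩ = χ c) :
    ∃ χext : D →* ℂˣ, ∀ c : C, χext (c : D) = χ c := by
  have hχ' : ∀ d c, χ (MulAut.conjNormal d c) = χ c := fun d c ↦ by
    have h : d⁻¹⁻¹ * (c : D) * d⁻¹ ∈ C := by simpa using (MulAut.conjNormal d c).2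
    exact (congrArg χ (Subtype.ext (by simp))).trans (hχ d⁻¹ c h)
  obtain ⟨ψ, hψ⟩ := C.exists_extension_of_isCyclic_quotient χ hχ'
  exact ⟨ψ, fun c ↦ DFunLike.congr_fun hψ c⟩

/-- A conjugation-invariant character of a normal subgroup `C ◁ D` with cyclic
quotient extends to a character of the finite group `D`. -/
theorem invariant_character_extends_of_cyclic_quotient {D : Type*} [Group D]
    [Finite D] (C : Subgroup D) [C.Normal] [IsCyclic (D ⧸ C)]
    (χ : C →* ℂˣ)
    (hχ : ∀ (d : D) (c : C) (h : d⁻¹ * (c : D) * d ∈ C), χ ⟨d⁻¹ * c * d, h⟩ = χ c) :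
    ∃ χext : D →* ℂˣ, ∀ c : C, χext (c : D) = χ c :=
  invariant_character_extends_of_cyclic_quotient_general C χ hχ
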